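/- Let Q be a rack with operation ▷ and dual operation ◁, and let S be a nonempty subset of Q. Then the set L(S) of all elements of Q expressible as fully left-associated words with letters in S is closed under both operations ▷ and ◁ (i.e., if a, b ∈ L(S) then a ▷ b ∈ L(S) and a ◁ b ∈ L(S)); consequently L(S) equals the subrack of Q generated by S. -/

import Mathlib

/-!
Each of `▷ x`, `◁ x` is a rack automorphism, so acting by an element of `S` on the right of a
left-associated word can be pushed past its last letter: for instance
`a ▷ (c ▷ x) = ((a ◁ x) ▷ c) ▷ x`, and likewise for the three other combinations of operations.
Induction on the right-hand word then shows that `L(S)` is closed under `▷` and `◁`; since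
`L(S)` is clearly contained in every subset containing `S` and closed under both operations,
it is the subrack generated by `S`.
-/

/-- Fully left-associated words with letters in `S`: an element of `S`, or a word acted on
(by `tr` or `tl`) by an element of `S`. -/
inductive LWord {Q : Type*} (tr tl : Q → Q → Q) (S : Set Q) : Q → Prop
  | base : ∀ x ∈ S, LWord tr tl S x
  | ofTr : ∀ {a : Q} (x : Q), LWord tr tl S a → x ∈ S → LWord tr tl S (tr a x)
  | ofTl : ∀ {a : Q} (x : Q), LWord tr tl S a → x ∈ S → LWord tr tl S (tl a x)

structure IsRightRack {Q : Type*} (tr tl : Q → Q → Q) : Prop where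
  right_distrib : ∀ a b c : Q, tr (tr a b) c = tr (tr a c) (tr b c)
  tl_tr : ∀ x y : Q, tl (tr x y) y = x
  tr_tl : ∀ x y : Q, tr (tl x y) y = x

namespace IsRightRack

variable {Q : Type*} {tr tl : Q → Q → Q}

theorem tl_eq_of_tr_eq (h : IsRightRack tr tl) {a w y : Q} (hw : tr w y = a) : tl a y = w := by
  rw [← hw, h.tl_tr]

theorem tr_tr_eq (h : IsRightRack tr tl) (a c x : Q) :
    tr a (tr c x) = tr (tr (tl a x) c) x := by
  rw [h.right_distrib, h.tr_tl]

theorem tl_tr_eq (h : IsRightRack tr tl) (a c x : Q) :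
    tl a (tr c x) = tr (tl (tl a x) c) x :=
  h.tl_eq_of_tr_eq <| by rw [← h.right_distrib, h.tr_tl, h.tr_tl]

theorem tr_tl_eq (h : IsRightRack tr tl) (a c x : Q) :
    tr a (tl c x) = tl (tr (tr a x) c) x :=
  (h.tl_eq_of_tr_eq <| by rw [h.right_distrib, h.tr_tl]).symm

theorem tl_tl_eq (h : IsRightRack tr tl) (a c x : Q) :
    tl a (tl c x) = tl (tl (tr a x) c) x :=
  h.tl_eq_of_tr_eq <| by rw [h.tr_tl_eq, h.tr_tl, h.tr_tl, h.tl_tr]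

end IsRightRack

namespace LWord

variable {Q : Type*} {tr tl : Q → Q → Q} {S : Set Q}

theorem tr_and_tl (h : IsRightRack tr tl) {a b : Q} (ha : LWord tr tl S a)
    (hb : LWord tr tl S b) : LWord tr tl S (tr a b) ∧ LWord tr tl S (tl a b) := by
  induction hb generalizing a with
  | base x hx => exact ⟨ofTr x ha hx, ofTl x ha hx⟩
  | ofTr x _ hx ih =>
    obtain ⟨htr, htl⟩ := ih (ofTl x ha hx)
    rw [h.tr_tr_eq, h.tl_tr_eq]
    exact ⟨ofTr x htr hx, ofTr x htl hx⟩
  | ofTl x _ hx ih =>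
    obtain ⟨htr, htl⟩ := ih (ofTr x ha hx)
    rw [h.tr_tl_eq, h.tl_tl_eq]
    exact ⟨ofTl x htr hx, ofTl x htl hx⟩

theorem mem_of_closed {T : Set Q} (hST : S ⊆ T) (hTr : ∀ a ∈ T, ∀ b ∈ T, tr a b ∈ T)
    (hTl : ∀ a ∈ T, ∀ b ∈ T, tl a b ∈ T) {a : Q} (ha : LWord tr tl S a) : a ∈ T := by
  induction ha with
  | base x hx => exact hST hx
  | ofTr x _ hx ih => exact hTr _ ih _ (hST hx)
  | ofTl x _ hx ih => exact hTl _ ih _ (hST hx)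

end LWord

theorem stmt9_general {Q : Type*} (tr tl : Q → Q → Q)
    (hqiii : ∀ a b c : Q, tr (tr a b) c = tr (tr a c) (tr b c))
    (hdual1 : ∀ x y : Q, tl (tr x y) y = x)
    (hdual2 : ∀ x y : Q, tr (tl x y) y = x)
    (S : Set Q) :
    (∀ a b : Q, LWord tr tl S a → LWord tr tl S b →
      LWord tr tl S (tr a b) ∧ LWord tr tl S (tl a b)) ∧
    {a : Q | LWord tr tl S a} =
      ⋂₀ {T : Set Q | S ⊆ T ∧ (∀ a ∈ T, ∀ b ∈ T, tr a b ∈ T) ∧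
        (∀ a ∈ T, ∀ b ∈ T, tl a b ∈ T)} := by
  have hrack : IsRightRack tr tl := ⟨hqiii, hdual1, hdual2⟩
  have hclosed : ∀ a b : Q, LWord tr tl S a → LWord tr tl S b →
      LWord tr tl S (tr a b) ∧ LWord tr tl S (tl a b) :=
    fun _ _ => LWord.tr_and_tl hrack
  refine ⟨hclosed, Set.Subset.antisymm ?_ ?_⟩
  · rintro a ha T ⟨hST, hTr, hTl⟩
    exact LWord.mem_of_closed hST hTr hTl ha
  · exact Set.sInter_subset_of_mem ⟨fun x hx => LWord.base x hx,
      fun u hu v hv => (hclosed u v hu hv).1, fun u hu v hv => (hclosed u v hu hv).2⟩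

/-- In a rack `(Q, ▷)` with dual `◁` and a nonempty `S ⊆ Q`, the set `L(S)` of
fully left-associated words with letters in `S` is closed under both `▷` and `◁`, and hence
equals the subrack generated by `S` (the smallest subset of `Q` containing `S` and closed
under both operations). -/
theorem stmt9 {Q : Type*} (tr tl : Q → Q → Q)
    (hqii : ∀ a b : Q, ∃! c : Q, a = tr c b)
    (hqiii : ∀ a b c : Q, tr (tr a b) c = tr (tr a c) (tr b c))
    (hdual1 : ∀ x y : Q, tl (tr x y) y = x)
    (hdual2 : ∀ x y : Q, tr (tl x y) y = x)
    (S : Set Q) (hS : S.Nonempty) :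
    (∀ a b : Q, LWord tr tl S a → LWord tr tl S b →
      LWord tr tl S (tr a b) ∧ LWord tr tl S (tl a b)) ∧
    {a : Q | LWord tr tl S a} =
      ⋂₀ {T : Set Q | S ⊆ T ∧ (∀ a ∈ T, ∀ b ∈ T, tr a b ∈ T) ∧
        (∀ a ∈ T, ∀ b ∈ T, tl a b ∈ T)} :=
  stmt9_general tr tl hqiii hdual1 hdual2 S
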